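/- Let (Ω, 𝓕, μ) be a probability space with filtration 𝓕_0 ⊆ … ⊆ 𝓕_n ⊆ 𝓕 and let k ≥ 1. For each j ∈ {1, …, k} and t = 1, …, n, let g^j_t : Ω → ℝ be 𝓕_t-measurable with |g^j_t| ≤ 1 almost surely and E[g^j_t | 𝓕_{t−1}] = 0 almost surely, and let w^j_t : Ω → {0,1} be 𝓕_{t−1}-measurable. Write S^j = Σ_{t=1}^n w^j_t and T^j = Σ_{t=1}^n w^j_t g^j_t. Let I : Ω → {1, …, k} be any measurable random index. Then for every α > 0 and every integer m ≥ 1, μ({ |T^I| > α S^I } ∩ { S^I ≥ m }) ≤ 2k · exp(−m α² / 2) / (1 − exp(−α² / 2)). -/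

import Mathlib

/-!
For one sequence, `Z = exp (∑ₜ wₜ (α gₜ - α² / 2))` is a product of factors whose conditional
expectation given the past is at most `1`: by convexity `exp (α x) ≤ cosh α + x sinh α` on
`[-1, 1]`, so the conditional Hoeffding bound `E[exp (α gₜ) | ℱₜ₋₁] ≤ exp (α² / 2)` holds, and a
predictable weight `wₜ ∈ {0, 1}` either keeps that factor or replaces it by `1`. Hence `E Z ≤ 1`.
Since the exponent already contains the random count `S = ∑ wₜ`, on the event `α S < T, S ≥ m`
we get `Z ≥ exp (m α² / 2)` directly, and Markov's inequality gives `exp (-m α² / 2)` without a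
union bound over the value of `S`. Applying this to `g` and `-g` and taking a union bound over
the `k` possible values of `I` gives `2 k exp (-m α² / 2)`, which is below the stated bound.
-/

open MeasureTheory Finset Real

theorem exp_mul_le_cosh_add_sinh_mul (α : ℝ) {x : ℝ} (hx : |x| ≤ 1) :
    exp (α * x) ≤ cosh α + sinh α * x := by
  obtain ⟨hx₁, hx₂⟩ := abs_le.1 hx
  have key := convexOn_exp.2 (Set.mem_univ (-α)) (Set.mem_univ α)
    (by linarith : 0 ≤ (1 - x) / 2) (by linarith : 0 ≤ (1 + x) / 2) (by ring)
  simp only [smul_eq_mul] at key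
  calc exp (α * x) = exp ((1 - x) / 2 * -α + (1 + x) / 2 * α) := by ring_nf
    _ ≤ (1 - x) / 2 * exp (-α) + (1 + x) / 2 * exp α := key
    _ = cosh α + sinh α * x := by rw [cosh_eq, sinh_eq]; ring

theorem measure_ge_le_inv_of_integral_le_one {Ω : Type*} {mΩ : MeasurableSpace Ω} {μ : Measure Ω}
    [IsFiniteMeasure μ] {Z : Ω → ℝ} (hZ_nonneg : 0 ≤ᵐ[μ] Z) (hZ_int : Integrable Z μ)
    (hZ : ∫ ω, Z ω ∂μ ≤ 1) {c : ℝ} (hc : 0 < c) :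
    μ {ω | c ≤ Z ω} ≤ ENNReal.ofReal c⁻¹ := by
  rw [← ofReal_measureReal (measure_ne_top μ _)]
  refine ENNReal.ofReal_le_ofReal ?_
  rw [← one_div, le_div_iff₀ hc]
  linarith [mul_meas_ge_le_integral_of_nonneg hZ_nonneg hZ_int c]

theorem ae_norm_prod_le_pow {Ω ι : Type*} {mΩ : MeasurableSpace Ω} {μ : Measure Ω}
    (s : Finset ι) {X : ι → Ω → ℝ} {C : ℝ} (hX_nonneg : ∀ t ∈ s, ∀ ω, 0 ≤ X t ω)
    (hX_bdd : ∀ t ∈ s, ∀ᵐ ω ∂μ, X t ω ≤ C) :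
    ∀ᵐ ω ∂μ, ‖∏ t ∈ s, X t ω‖ ≤ C ^ s.card := by
  filter_upwards [(Filter.eventually_all_finset s).2 hX_bdd] with ω hω
  rw [Real.norm_of_nonneg (prod_nonneg fun t ht => hX_nonneg t ht ω)]
  simpa using prod_le_prod (g := fun _ => C) (fun t ht => hX_nonneg t ht ω) hω

section ConditionalBounds

variable {Ω : Type*} {m mΩ : MeasurableSpace Ω} {μ : Measure Ω} [IsFiniteMeasure μ]
  {G : Ω → ℝ}

theorem condExp_exp_mul_le_exp_sq_half (hm : m ≤ mΩ) (hG : AEMeasurable G μ)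
    (hG_bdd : ∀ᵐ ω ∂μ, |G ω| ≤ 1) (hG_zero : μ[G|m] =ᵐ[μ] 0) (α : ℝ) :
    μ[fun ω => exp (α * G ω)|m] ≤ᵐ[μ] fun _ => exp (α ^ 2 / 2) := by
  have hG_int : Integrable G μ :=
    .of_mem_Icc (-1) 1 hG (by filter_upwards [hG_bdd] with ω hω using abs_le.1 hω)
  have h_exp_int : Integrable (fun ω => exp (α * G ω)) μ :=
    ProbabilityTheory.integrable_exp_mul_of_mem_Icc hG
      (by filter_upwards [hG_bdd] with ω hω using abs_le.1 hω)
  have h_mono := condExp_mono (m := m) h_exp_int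
    ((integrable_const (cosh α)).add (hG_int.const_mul (sinh α)))
    (by filter_upwards [hG_bdd] with ω hω using exp_mul_le_cosh_add_sinh_mul α hω)
  have h_add := condExp_add (integrable_const (cosh α)) (hG_int.const_mul (sinh α)) m
  have h_smul : μ[fun ω => sinh α * G ω|m] =ᵐ[μ] sinh α • μ[G|m] :=
    condExp_smul (sinh α) G m
  filter_upwards [h_mono, h_add, h_smul, hG_zero] with ω h_mono h_add h_smul hG_zero
  calc _ ≤ _ := h_mono
    _ = cosh α := by simp [h_add, h_smul, hG_zero, condExp_const hm]
    _ ≤ exp (α ^ 2 / 2) := cosh_le_exp_half_sq α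

theorem condExp_exp_weighted_le_one (hm : m ≤ mΩ) (hG : AEMeasurable G μ)
    (hG_bdd : ∀ᵐ ω ∂μ, |G ω| ≤ 1) (hG_zero : μ[G|m] =ᵐ[μ] 0) {W : Ω → ℝ}
    (hW : StronglyMeasurable[m] W) (hW01 : ∀ ω, W ω = 0 ∨ W ω = 1) (α : ℝ) :
    μ[fun ω => exp (W ω * (α * G ω - α ^ 2 / 2))|m] ≤ᵐ[μ] 1 := by
  set V : Ω → ℝ := fun ω => exp (-(α ^ 2 / 2)) * exp (α * G ω) - 1
  have h_affine : (fun ω => exp (W ω * (α * G ω - α ^ 2 / 2))) = fun ω => 1 + W ω * V ω := by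
    funext ω
    rcases hW01 ω with h | h <;> simp [V, h, ← exp_add, sub_eq_neg_add]
  have h_exp_int : Integrable (fun ω => exp (α * G ω)) μ :=
    ProbabilityTheory.integrable_exp_mul_of_mem_Icc hG
      (by filter_upwards [hG_bdd] with ω hω using abs_le.1 hω)
  have hV_int : Integrable V μ := (h_exp_int.const_mul _).sub (integrable_const 1)
  have hW_norm : ∀ᵐ ω ∂μ, ‖W ω‖ ≤ 1 :=
    .of_forall fun ω => by rcases hW01 ω with h | h <;> simp [h]
  have hWV_int : Integrable (W * V) μ :=
    hV_int.bdd_mul (hW.mono hm).aestronglyMeasurable hW_norm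
  have hV_cond : μ[V|m] ≤ᵐ[μ] 0 := by
    have h_sub : μ[V|m] =ᵐ[μ]
        μ[fun ω => exp (-(α ^ 2 / 2)) * exp (α * G ω)|m] - μ[fun _ => (1 : ℝ)|m] :=
      condExp_sub (h_exp_int.const_mul _) (integrable_const 1) m
    have h_smul : μ[fun ω => exp (-(α ^ 2 / 2)) * exp (α * G ω)|m] =ᵐ[μ]
        exp (-(α ^ 2 / 2)) • μ[fun ω => exp (α * G ω)|m] :=
      condExp_smul (exp (-(α ^ 2 / 2))) (fun ω => exp (α * G ω)) m
    filter_upwards [h_sub, h_smul, condExp_exp_mul_le_exp_sq_half hm hG hG_bdd hG_zero α]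
      with ω h_sub h_smul h_hoeffding
    have := mul_le_mul_of_nonneg_left h_hoeffding (exp_pos (-(α ^ 2 / 2))).le
    rw [← exp_add, neg_add_cancel, exp_zero] at this
    rw [h_sub, Pi.sub_apply, h_smul, Pi.smul_apply, smul_eq_mul, condExp_const hm,
      Pi.zero_apply]
    linarith
  have h_add : μ[fun ω => 1 + W ω * V ω|m] =ᵐ[μ] μ[fun _ => (1 : ℝ)|m] + μ[W * V|m] :=
    condExp_add (integrable_const 1) hWV_int m
  rw [h_affine]
  filter_upwards [h_add, condExp_stronglyMeasurable_mul_of_bound hm hW hV_int 1 hW_norm, hV_cond]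
    with ω h_add h_mul hV_cond
  have hW_nonneg : 0 ≤ W ω := by rcases hW01 ω with h | h <;> simp [h]
  rw [Pi.zero_apply] at hV_cond
  rw [h_add, Pi.add_apply, h_mul, Pi.mul_apply, condExp_const hm, Pi.one_apply]
  nlinarith

end ConditionalBounds

theorem integral_prod_Icc_le_one {Ω : Type*} {mΩ : MeasurableSpace Ω} {μ : Measure Ω}
    [IsProbabilityMeasure μ] (ℱ : Filtration ℕ mΩ) (X : ℕ → Ω → ℝ) (C : ℝ) (n : ℕ)
    (hX_meas : ∀ t ∈ Icc 1 n, StronglyMeasurable[ℱ t] (X t))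
    (hX_nonneg : ∀ t ∈ Icc 1 n, ∀ ω, 0 ≤ X t ω)
    (hX_bdd : ∀ t ∈ Icc 1 n, ∀ᵐ ω ∂μ, X t ω ≤ C)
    (hX_cond : ∀ t ∈ Icc 1 n, μ[X t|ℱ (t - 1)] ≤ᵐ[μ] 1) :
    ∫ ω, ∏ t ∈ Icc 1 n, X t ω ∂μ ≤ 1 := by
  induction n with
  | zero => simp
  | succ n ih =>
    have h_sub : Icc 1 n ⊆ Icc 1 (n + 1) := Icc_subset_Icc_right n.le_succ
    have h_top : n + 1 ∈ Icc 1 (n + 1) := right_mem_Icc.2 n.succ_pos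
    set P : Ω → ℝ := fun ω => ∏ t ∈ Icc 1 n, X t ω
    have hP_meas : StronglyMeasurable[ℱ n] P :=
      Finset.stronglyMeasurable_fun_prod (Icc 1 n) fun t ht =>
        (hX_meas t (h_sub ht)).mono (ℱ.mono (mem_Icc.1 ht).2)
    have hP_bdd : ∀ᵐ ω ∂μ, ‖P ω‖ ≤ C ^ n := by
      have := ae_norm_prod_le_pow (μ := μ) (Icc 1 n) (fun t ht => hX_nonneg t (h_sub ht))
        fun t ht => hX_bdd t (h_sub ht)
      rwa [Nat.card_Icc, add_tsub_cancel_right] at this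
    have hX_int : Integrable (X (n + 1)) μ :=
      .of_mem_Icc 0 C ((hX_meas _ h_top).mono (ℱ.le _)).aemeasurable
        (by filter_upwards [hX_bdd _ h_top] with ω hω using ⟨hX_nonneg _ h_top ω, hω⟩)
    have hP_int : Integrable P μ :=
      .of_bound (hP_meas.mono (ℱ.le n)).aestronglyMeasurable _ hP_bdd
    have h_pull : μ[P * X (n + 1)|ℱ n] =ᵐ[μ] P * μ[X (n + 1)|ℱ n] :=
      condExp_stronglyMeasurable_mul_of_bound (ℱ.le n) hP_meas hX_int _ hP_bdd
    have h_step : μ[P * X (n + 1)|ℱ n] ≤ᵐ[μ] P := by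
      filter_upwards [h_pull, hX_cond _ h_top] with ω h_pull h_cond
      rw [h_pull, Pi.mul_apply]
      exact mul_le_of_le_one_right (prod_nonneg fun t ht => hX_nonneg t (h_sub ht) ω) h_cond
    calc ∫ ω, ∏ t ∈ Icc 1 (n + 1), X t ω ∂μ = ∫ ω, (P * X (n + 1)) ω ∂μ := by
          simp only [prod_Icc_succ_top (Nat.le_add_left 1 n), P, Pi.mul_apply]
      _ = ∫ ω, μ[P * X (n + 1)|ℱ n] ω ∂μ := (integral_condExp (ℱ.le n)).symm
      _ ≤ ∫ ω, P ω ∂μ := integral_mono_ae integrable_condExp hP_int h_step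
      _ ≤ 1 := ih (fun t ht => hX_meas t (h_sub ht)) (fun t ht => hX_nonneg t (h_sub ht))
          (fun t ht => hX_bdd t (h_sub ht)) (fun t ht => hX_cond t (h_sub ht))

section WeightedMDS

variable {Ω : Type*} {mΩ : MeasurableSpace Ω}

structure IsBoundedMDSWithPredictableWeights (μ : Measure Ω) (ℱ : Filtration ℕ mΩ) (n : ℕ)
    (g w : ℕ → Ω → ℝ) : Prop where
  measurable_g : ∀ t ∈ Icc 1 n, Measurable[ℱ t] (g t)
  abs_g_le_one : ∀ t ∈ Icc 1 n, ∀ᵐ ω ∂μ, |g t ω| ≤ 1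
  condExp_g_eq_zero : ∀ t ∈ Icc 1 n, μ[g t|ℱ (t - 1)] =ᵐ[μ] 0
  w_eq_zero_or_one : ∀ t ∈ Icc 1 n, ∀ ω, w t ω = 0 ∨ w t ω = 1
  measurable_w : ∀ t ∈ Icc 1 n, Measurable[ℱ (t - 1)] (w t)

variable {μ : Measure Ω} {ℱ : Filtration ℕ mΩ} {n : ℕ} {g w : ℕ → Ω → ℝ}

namespace IsBoundedMDSWithPredictableWeights

theorem neg (h : IsBoundedMDSWithPredictableWeights μ ℱ n g w) :
    IsBoundedMDSWithPredictableWeights μ ℱ n (-g) w where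
  measurable_g t ht := (h.measurable_g t ht).neg
  abs_g_le_one t ht := by simpa using h.abs_g_le_one t ht
  condExp_g_eq_zero t ht := by
    filter_upwards [condExp_neg (g t) (ℱ (t - 1)), h.condExp_g_eq_zero t ht] with ω h_neg h_zero
    simp [h_neg, h_zero]
  w_eq_zero_or_one := h.w_eq_zero_or_one
  measurable_w := h.measurable_w

theorem measure_weighted_sum_gt_le [IsProbabilityMeasure μ]
    (h : IsBoundedMDSWithPredictableWeights μ ℱ n g w) {α : ℝ} (hα : 0 < α) (s : ℝ) :
    μ ({ω | α * (∑ t ∈ Icc 1 n, w t ω) < ∑ t ∈ Icc 1 n, w t ω * g t ω} ∩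
       {ω | s ≤ ∑ t ∈ Icc 1 n, w t ω}) ≤ ENNReal.ofReal (exp (-s * α ^ 2 / 2)) := by
  set F : ℕ → Ω → ℝ := fun t ω => exp (w t ω * (α * g t ω - α ^ 2 / 2))
  have hF_meas : ∀ t ∈ Icc 1 n, StronglyMeasurable[ℱ t] (F t) := fun t ht =>
    (((h.measurable_w t ht).mono (ℱ.mono (Nat.sub_le t 1)) le_rfl).mul
      (((h.measurable_g t ht).const_mul α).sub_const _)).exp.stronglyMeasurable
  have hF_nonneg : ∀ t ∈ Icc 1 n, ∀ ω, 0 ≤ F t ω := fun t _ ω => (exp_pos _).le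
  have hF_bdd : ∀ t ∈ Icc 1 n, ∀ᵐ ω ∂μ, F t ω ≤ exp α := fun t ht => by
    filter_upwards [h.abs_g_le_one t ht] with ω hω
    refine exp_le_exp.2 ?_
    rcases h.w_eq_zero_or_one t ht ω with hw | hw <;> simp only [hw, zero_mul, one_mul]
    · exact hα.le
    · nlinarith [(abs_le.1 hω).2]
  have hF_cond : ∀ t ∈ Icc 1 n, μ[F t|ℱ (t - 1)] ≤ᵐ[μ] 1 := fun t ht =>
    condExp_exp_weighted_le_one (ℱ.le _)
      ((h.measurable_g t ht).mono (ℱ.le t) le_rfl).aemeasurable (h.abs_g_le_one t ht)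
      (h.condExp_g_eq_zero t ht) (h.measurable_w t ht).stronglyMeasurable
      (h.w_eq_zero_or_one t ht) α
  set Z : Ω → ℝ := fun ω => ∏ t ∈ Icc 1 n, F t ω
  have hZ_int : Integrable Z μ :=
    .of_bound (Finset.stronglyMeasurable_fun_prod _ fun t ht =>
      (hF_meas t ht).mono (ℱ.le t)).aestronglyMeasurable _ (ae_norm_prod_le_pow _ hF_nonneg hF_bdd)
  -- on the event, `∑ w (α g - α² / 2) = α T - α² S / 2 > α² S / 2 ≥ α² s / 2`
  have h_sub : {ω | α * (∑ t ∈ Icc 1 n, w t ω) < ∑ t ∈ Icc 1 n, w t ω * g t ω} ∩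
      {ω | s ≤ ∑ t ∈ Icc 1 n, w t ω} ⊆ {ω | exp (s * α ^ 2 / 2) ≤ Z ω} := by
    rintro ω ⟨hT, hS⟩
    simp only [Set.mem_ofPred_eq, Z, F] at hT hS ⊢
    have h_sum : ∑ t ∈ Icc 1 n, w t ω * (α * g t ω - α ^ 2 / 2) =
        α * ∑ t ∈ Icc 1 n, w t ω * g t ω - α ^ 2 / 2 * ∑ t ∈ Icc 1 n, w t ω := by
      rw [mul_sum, mul_sum, ← sum_sub_distrib]
      exact sum_congr rfl fun t _ => by ring
    rw [← exp_sum, h_sum, exp_le_exp]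
    nlinarith [mul_lt_mul_of_pos_left hT hα]
  calc _ ≤ μ {ω | exp (s * α ^ 2 / 2) ≤ Z ω} := measure_mono h_sub
    _ ≤ ENNReal.ofReal (exp (s * α ^ 2 / 2))⁻¹ :=
      measure_ge_le_inv_of_integral_le_one
        (.of_forall fun ω => prod_nonneg fun t ht => hF_nonneg t ht ω) hZ_int (integral_prod_Icc_le_one ℱ F _ n hF_meas hF_nonneg hF_bdd hF_cond) (exp_pos _)
    _ = ENNReal.ofReal (exp (-s * α ^ 2 / 2)) := by rw [← exp_neg]; ring_nf

theorem measure_abs_weighted_sum_gt_le [IsProbabilityMeasure μ]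
    (h : IsBoundedMDSWithPredictableWeights μ ℱ n g w) {α : ℝ} (hα : 0 < α) (s : ℝ) :
    μ ({ω | α * (∑ t ∈ Icc 1 n, w t ω) < |∑ t ∈ Icc 1 n, w t ω * g t ω|} ∩
       {ω | s ≤ ∑ t ∈ Icc 1 n, w t ω}) ≤ 2 * ENNReal.ofReal (exp (-s * α ^ 2 / 2)) := by
  have h_sub : {ω | α * (∑ t ∈ Icc 1 n, w t ω) < |∑ t ∈ Icc 1 n, w t ω * g t ω|} ∩
      {ω | s ≤ ∑ t ∈ Icc 1 n, w t ω} ⊆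
      ({ω | α * (∑ t ∈ Icc 1 n, w t ω) < ∑ t ∈ Icc 1 n, w t ω * g t ω} ∩
        {ω | s ≤ ∑ t ∈ Icc 1 n, w t ω}) ∪
      ({ω | α * (∑ t ∈ Icc 1 n, w t ω) < ∑ t ∈ Icc 1 n, w t ω * (-g) t ω} ∩
        {ω | s ≤ ∑ t ∈ Icc 1 n, w t ω}) := by
    rintro ω ⟨hT, hS⟩
    rcases lt_abs.1 (Set.mem_ofPred_eq.mp hT) with hT | hT
    · exact .inl ⟨hT, hS⟩
    · refine .inr ⟨?_, hS⟩
      simpa only [Set.mem_ofPred_eq, Pi.neg_apply, mul_neg, sum_neg_distrib] using hT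
  calc _ ≤ _ := measure_mono h_sub
    _ ≤ _ := measure_union_le _ _
    _ ≤ _ := add_le_add (h.measure_weighted_sum_gt_le hα s) (h.neg.measure_weighted_sum_gt_le hα s)
    _ = _ := (two_mul _).symm

end IsBoundedMDSWithPredictableWeights

end WeightedMDS

theorem weighted_azuma_selected_index_general
    {Ω : Type*} [m0 : MeasurableSpace Ω] (μ : Measure Ω) [IsProbabilityMeasure μ]
    (ℱ : Filtration ℕ m0) (n k : ℕ)
    (g w : Fin k → ℕ → Ω → ℝ)
    (hgmeas : ∀ j, ∀ t ∈ Icc 1 n, Measurable[ℱ t] (g j t))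
    (hgbdd : ∀ j, ∀ t ∈ Icc 1 n, ∀ᵐ ω ∂μ, |g j t ω| ≤ 1)
    (hgmart : ∀ j, ∀ t ∈ Icc 1 n, μ[g j t|ℱ (t - 1)] =ᵐ[μ] 0)
    (hw01 : ∀ j, ∀ t ∈ Icc 1 n, ∀ ω, w j t ω = 0 ∨ w j t ω = 1)
    (hwmeas : ∀ j, ∀ t ∈ Icc 1 n, Measurable[ℱ (t - 1)] (w j t))
    (I : Ω → Fin k)
    (α : ℝ) (hα : 0 < α) (m : ℕ) :
    μ ({ω | α * (∑ t ∈ Icc 1 n, w (I ω) t ω) < |∑ t ∈ Icc 1 n, w (I ω) t ω * g (I ω) t ω|} ∩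
       {ω | (m : ℝ) ≤ ∑ t ∈ Icc 1 n, w (I ω) t ω}) ≤
      ENNReal.ofReal
        (2 * (k : ℝ) * Real.exp (-(m : ℝ) * α ^ 2 / 2) / (1 - Real.exp (-α ^ 2 / 2))) := by
  have h_mds (j : Fin k) : IsBoundedMDSWithPredictableWeights μ ℱ n (g j) (w j) :=
    ⟨hgmeas j, hgbdd j, hgmart j, hw01 j, hwmeas j⟩
  have hq_pos : 0 < 1 - exp (-α ^ 2 / 2) := by
    rw [sub_pos, Real.exp_lt_one_iff]
    nlinarith
  have hq_le : 1 - exp (-α ^ 2 / 2) ≤ 1 := by linarith [exp_pos (-α ^ 2 / 2)]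
  calc _ ≤ μ (⋃ j, {ω | α * (∑ t ∈ Icc 1 n, w j t ω) < |∑ t ∈ Icc 1 n, w j t ω * g j t ω|} ∩
          {ω | (m : ℝ) ≤ ∑ t ∈ Icc 1 n, w j t ω}) :=
        measure_mono fun ω hω => Set.mem_iUnion.2 ⟨I ω, hω⟩
    _ ≤ ∑ j, μ ({ω | α * (∑ t ∈ Icc 1 n, w j t ω) < |∑ t ∈ Icc 1 n, w j t ω * g j t ω|} ∩
          {ω | (m : ℝ) ≤ ∑ t ∈ Icc 1 n, w j t ω}) := measure_iUnion_fintype_le μ _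
    _ ≤ ∑ _j : Fin k, 2 * ENNReal.ofReal (exp (-(m : ℝ) * α ^ 2 / 2)) :=
        sum_le_sum fun j _ => (h_mds j).measure_abs_weighted_sum_gt_le hα m
    _ = ENNReal.ofReal (2 * k * exp (-(m : ℝ) * α ^ 2 / 2)) := by
        rw [sum_const, card_univ, Fintype.card_fin, nsmul_eq_mul, ← mul_assoc, mul_comm _ 2,
          ENNReal.ofReal_mul (by positivity)]
        norm_cast
    _ ≤ _ := ENNReal.ofReal_le_ofReal (le_div_self (by positivity) hq_pos hq_le)

/-- Abstract form of the second part of the technical Lemma: for `k` bounded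
martingale difference sequences with predictable `{0,1}`-valued weights and any
measurable random index `I`, the selected weighted sum concentrates on the event
that the selected sequence has been activated at least `m` times. -/
theorem weighted_azuma_selected_index
    {Ω : Type*} [m0 : MeasurableSpace Ω] (μ : Measure Ω) [IsProbabilityMeasure μ]
    (ℱ : Filtration ℕ m0) (n k : ℕ) (hk : 1 ≤ k)
    (g w : Fin k → ℕ → Ω → ℝ)
    (hgmeas : ∀ j, ∀ t ∈ Icc 1 n, Measurable[ℱ t] (g j t))
    (hgbdd : ∀ j, ∀ t ∈ Icc 1 n, ∀ᵐ ω ∂μ, |g j t ω| ≤ 1)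
    (hgmart : ∀ j, ∀ t ∈ Icc 1 n, μ[g j t|ℱ (t - 1)] =ᵐ[μ] 0)
    (hw01 : ∀ j, ∀ t ∈ Icc 1 n, ∀ ω, w j t ω = 0 ∨ w j t ω = 1)
    (hwmeas : ∀ j, ∀ t ∈ Icc 1 n, Measurable[ℱ (t - 1)] (w j t))
    (I : Ω → Fin k) (hI : Measurable I)
    (α : ℝ) (hα : 0 < α) (m : ℕ) (hm : 1 ≤ m) :
    μ ({ω | α * (∑ t ∈ Icc 1 n, w (I ω) t ω) < |∑ t ∈ Icc 1 n, w (I ω) t ω * g (I ω) t ω|} ∩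
       {ω | (m : ℝ) ≤ ∑ t ∈ Icc 1 n, w (I ω) t ω}) ≤
      ENNReal.ofReal
        (2 * (k : ℝ) * Real.exp (-(m : ℝ) * α ^ 2 / 2) / (1 - Real.exp (-α ^ 2 / 2))) :=
  weighted_azuma_selected_index_general (m0 := m0) μ ℱ n k g w hgmeas hgbdd hgmart hw01 hwmeas I α
    hα m
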